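/- Let λ be a regular uncountable cardinal, S ⊆ {δ < λ⁺ : cf(δ) = λ}, C̄ = ⟨C_δ : δ ∈ S⟩ a sequence where each C_δ is a club of δ of order type λ, and h̄ = ⟨h_δ : δ ∈ S⟩ with h_δ : C_δ → λ. Then the forcing notion Q²_{C̄,h̄} is (<λ)-complete: every ≤-increasing sequence of conditions of length < λ has an upper bound in Q²_{C̄,h̄}. -/

import Mathlib

/-!
The union of a chain of conditions is defined on the supremum `α'` of their domains, and
`α' < λ⁺` because fewer than `λ` ordinals below the regular cardinal `λ⁺` are bounded there.
The only work is the coherence requirement at a `δ ∈ S` with `δ ≤ α'`: since `cf δ = λ` exceeds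
the length of the chain, `δ` is already below the domain of some member of the chain, and that
member supplies the `γ`.
-/

/-- `C` is a club of the limit ordinal `δ`: a subset of `δ`, unbounded in `δ`,
closed below `δ`. -/
def IsClubBelow (C : Set Ordinal.{0}) (δ : Ordinal.{0}) : Prop :=
  (∀ α ∈ C, α < δ) ∧ (∀ α < δ, ∃ β ∈ C, α ≤ β) ∧
    ∀ B ⊆ C, B.Nonempty → sSup B < δ → sSup B ∈ C

/-- The order type of a set of ordinals. -/
noncomputable def otype (C : Set Ordinal.{0}) : Ordinal.{1} :=
  Ordinal.type (Subrel ((· < ·) : Ordinal.{0} → Ordinal.{0} → Prop) (· ∈ C))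

/-- Conditions of the forcing notion `Q²_{C̄,h̄}`: pairs `(α, f)` with `α < λ⁺`
representing a function `f : α → λ` such that for every `δ ∈ S` with `δ ≤ α` there is
`γ < δ` with `f β = h δ β` for all `β ∈ C_δ ∖ γ`. -/
def Q2Cond (lam : Cardinal.{0}) (S : Set Ordinal.{0}) (C : Ordinal.{0} → Set Ordinal.{0})
    (h : Ordinal.{0} → Ordinal.{0} → Ordinal.{0})
    (α : Ordinal.{0}) (f : Ordinal.{0} → Ordinal.{0}) : Prop :=
  α < (Order.succ lam).ord ∧ (∀ β < α, f β < lam.ord) ∧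
    ∀ δ ∈ S, δ ≤ α → ∃ γ < δ, ∀ β ∈ C δ, γ ≤ β → f β = h δ β

/-- The order of `Q²_{C̄,h̄}` is extension of functions. -/
def Q2Le (α₀ : Ordinal.{0}) (f₀ : Ordinal.{0} → Ordinal.{0})
    (α₁ : Ordinal.{0}) (f₁ : Ordinal.{0} → Ordinal.{0}) : Prop :=
  α₀ ≤ α₁ ∧ ∀ β < α₀, f₁ β = f₀ β

open Cardinal Ordinal

namespace Ordinal

universe u

variable {o a : Ordinal.{u}} {g : Ordinal.{u} → Ordinal.{u}}

theorem iSup_Iio_lt_of_card_lt_cof (ho : o.card < a.cof) (hg : ∀ i < o, g i < a) :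
    ⨆ i : Set.Iio o, g i < a := by
  refine lift_iSup_lt_of_lt_cof ?_ fun i => hg i i.2
  rwa [Cardinal.mk_Iio_ordinal, Cardinal.lift_lift, ← lift_cof, Cardinal.lift_lt]

theorem exists_le_of_le_iSup_Iio (ho : o.card < a.cof) (ha : a ≤ ⨆ i : Set.Iio o, g i) :
    ∃ i < o, a ≤ g i := by
  by_contra! hlt
  exact (iSup_Iio_lt_of_card_lt_cof ho hlt).not_ge ha

theorem lt_iSup_Iio_iff {β : Ordinal.{u}} : β < ⨆ i : Set.Iio o, g i ↔ ∃ i < o, β < g i := by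
  simp only [Ordinal.lt_iSup_iff, Subtype.exists, Set.mem_Iio, exists_prop]

end Ordinal

section ChainUnion

variable {δ₀ : Ordinal.{0}} {α : Ordinal.{0} → Ordinal.{0}}
  {f : Ordinal.{0} → Ordinal.{0} → Ordinal.{0}}

/-- The union of the chain `⟨(α i, f i) : i < δ₀⟩`: at `β` it takes the value of the least member
whose domain contains `β`, and a junk value when `β` lies outside every domain. -/
noncomputable def chainUnion (δ₀ : Ordinal.{0}) (α : Ordinal.{0} → Ordinal.{0})
    (f : Ordinal.{0} → Ordinal.{0} → Ordinal.{0}) (β : Ordinal.{0}) : Ordinal.{0} :=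
  f (sInf {i | i < δ₀ ∧ β < α i}) β

theorem chainUnion_eq (hmono : ∀ i j, i ≤ j → j < δ₀ → Q2Le (α i) (f i) (α j) (f j))
    {i β : Ordinal.{0}} (hi : i < δ₀) (hβ : β < α i) : chainUnion δ₀ α f β = f i β := by
  have hmem : i ∈ {j | j < δ₀ ∧ β < α j} := ⟨hi, hβ⟩
  exact ((hmono _ i (csInf_le' hmem) hi).2 β (csInf_mem ⟨i, hmem⟩).2).symm

theorem q2Le_chainUnion (hmono : ∀ i j, i ≤ j → j < δ₀ → Q2Le (α i) (f i) (α j) (f j))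
    {i : Ordinal.{0}} (hi : i < δ₀) :
    Q2Le (α i) (f i) (⨆ j : Set.Iio δ₀, α j) (chainUnion δ₀ α f) :=
  ⟨Ordinal.le_iSup (fun j : Set.Iio δ₀ => α j) ⟨i, hi⟩, fun _ hβ => chainUnion_eq hmono hi hβ⟩

theorem q2Cond_chainUnion {lam : Cardinal.{0}} {S : Set Ordinal.{0}}
    {C : Ordinal.{0} → Set Ordinal.{0}} {h : Ordinal.{0} → Ordinal.{0} → Ordinal.{0}}
    (hlam : ℵ₀ ≤ lam) (hS : ∀ δ ∈ S, lam ≤ δ.cof) (hC : ∀ δ ∈ S, ∀ β ∈ C δ, β < δ)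
    (hδ₀ : δ₀ < lam.ord) (hcond : ∀ i < δ₀, Q2Cond lam S C h (α i) (f i))
    (hmono : ∀ i j, i ≤ j → j < δ₀ → Q2Le (α i) (f i) (α j) (f j)) :
    Q2Cond lam S C h (⨆ j : Set.Iio δ₀, α j) (chainUnion δ₀ α f) := by
  have hcard : δ₀.card < lam := lt_ord.mp hδ₀
  refine ⟨?_, ?_, ?_⟩
  · refine iSup_Iio_lt_of_card_lt_cof ?_ fun i hi => (hcond i hi).1
    rw [(isRegular_succ hlam).cof_ord]
    exact hcard.trans (Order.lt_succ lam)
  · intro β hβ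
    obtain ⟨i, hi, hβi⟩ := lt_iSup_Iio_iff.mp hβ
    rw [chainUnion_eq hmono hi hβi]
    exact (hcond i hi).2.1 β hβi
  · intro δ hδ hδle
    obtain ⟨i, hi, hδi⟩ := exists_le_of_le_iSup_Iio (hcard.trans_le (hS δ hδ)) hδle
    obtain ⟨γ, hγ, hfh⟩ := (hcond i hi).2.2 δ hδ hδi
    refine ⟨γ, hγ, fun β hβC hγβ => ?_⟩
    rw [chainUnion_eq hmono hi ((hC δ hδ β hβC).trans_le hδi)]
    exact hfh β hβC hγβ

end ChainUnion

theorem stmt11_general (lam : Cardinal.{0}) (hreg : lam.IsRegular)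
    (S : Set Ordinal.{0}) (hS : ∀ δ ∈ S, δ < (Order.succ lam).ord ∧ δ.cof = lam)
    (C : Ordinal.{0} → Set Ordinal.{0})
    (hC : ∀ δ ∈ S, IsClubBelow (C δ) δ ∧ otype (C δ) = Ordinal.lift.{1} lam.ord)
    (h : Ordinal.{0} → Ordinal.{0} → Ordinal.{0})
    (δ₀ : Ordinal.{0}) (hδ₀ : δ₀ < lam.ord)
    (α : Ordinal.{0} → Ordinal.{0}) (f : Ordinal.{0} → Ordinal.{0} → Ordinal.{0})
    (hcond : ∀ i < δ₀, Q2Cond lam S C h (α i) (f i))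
    (hmono : ∀ i j : Ordinal.{0}, i ≤ j → j < δ₀ → Q2Le (α i) (f i) (α j) (f j)) :
    ∃ (α' : Ordinal.{0}) (f' : Ordinal.{0} → Ordinal.{0}),
      Q2Cond lam S C h α' f' ∧ ∀ i < δ₀, Q2Le (α i) (f i) α' f' :=
  ⟨_, chainUnion δ₀ α f,
    q2Cond_chainUnion hreg.aleph0_le (fun δ hδ => (hS δ hδ).2.ge)
      (fun δ hδ => (hC δ hδ).1.1) hδ₀ hcond hmono,
    fun _ hi => q2Le_chainUnion hmono hi⟩

/-- For `λ` regular uncountable, `S ⊆ {δ < λ⁺ : cf δ = λ}`, clubs `C_δ` of `δ` of order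
type `λ` and colourings `h_δ : C_δ → λ`, the forcing notion `Q²_{C̄,h̄}` is
`(<λ)`-complete: every `≤`-increasing sequence of conditions of length `< λ` has an upper
bound in `Q²_{C̄,h̄}`. -/
theorem stmt11 (lam : Cardinal.{0}) (hreg : lam.IsRegular) (hunc : Cardinal.aleph0 < lam)
    (S : Set Ordinal.{0}) (hS : ∀ δ ∈ S, δ < (Order.succ lam).ord ∧ δ.cof = lam)
    (C : Ordinal.{0} → Set Ordinal.{0})
    (hC : ∀ δ ∈ S, IsClubBelow (C δ) δ ∧ otype (C δ) = Ordinal.lift.{1} lam.ord)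
    (h : Ordinal.{0} → Ordinal.{0} → Ordinal.{0})
    (hh : ∀ δ ∈ S, ∀ β ∈ C δ, h δ β < lam.ord)
    (δ₀ : Ordinal.{0}) (hδ₀ : δ₀ < lam.ord)
    (α : Ordinal.{0} → Ordinal.{0}) (f : Ordinal.{0} → Ordinal.{0} → Ordinal.{0})
    (hcond : ∀ i < δ₀, Q2Cond lam S C h (α i) (f i))
    (hmono : ∀ i j : Ordinal.{0}, i ≤ j → j < δ₀ → Q2Le (α i) (f i) (α j) (f j)) :
    ∃ (α' : Ordinal.{0}) (f' : Ordinal.{0} → Ordinal.{0}),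
      Q2Cond lam S C h α' f' ∧ ∀ i < δ₀, Q2Le (α i) (f i) α' f' :=
  stmt11_general lam hreg S hS C hC h δ₀ hδ₀ α f hcond hmono
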